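/- arXiv:2504.20396 — 2 statements merged into one kernel-verified Lean document; each statement's English description precedes it below -/
import Mathlib

section
/- Let c, e : [0,∞) → ℝ be bounded continuous functions with e(t) ≥ 0 for all t ≥ 0 and inf_{t≥0} c(t) ≥ c⋆ for some constant c⋆ > 0, set D(t) = e(t) − c(t), and let p : [0,∞) → ℝ be a differentiable solution of the time-varying Levins model p'(t) = c(t)·p(t)·(1 − p(t)) − e(t)·p(t) with p(0) ∈ (0,1]. If the upper Bohl exponent satisfies β⁺(D) < 0, then the metapopulation is persistent: liminf_{t→+∞} p(t) > 0. -/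
open Filter Set

/-- Transition operator of the scalar linear equation `x' = D t * x`. -/
noncomputable def Phi (D : ℝ → ℝ) (t s : ℝ) : ℝ :=
  Real.exp (∫ τ in s..t, D τ)

/-- Average of `D` over the interval from `q.1` to `q.2`. -/
noncomputable def bohlAvg (D : ℝ → ℝ) (q : ℝ × ℝ) : ℝ :=
  (q.2 - q.1)⁻¹ * ∫ τ in q.1..q.2, D τ

/-- The filter describing `t - s → +∞` with `t > s ≥ 0` for pairs `q = (s, t)`. -/
def bohlFilter : Filter (ℝ × ℝ) :=
  (Filter.atTop.comap fun q : ℝ × ℝ => q.2 - q.1) ⊓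
    Filter.principal {q : ℝ × ℝ | 0 ≤ q.1 ∧ q.1 < q.2}

/-- Upper Bohl exponent of `D`. -/
noncomputable def bohlUpper (D : ℝ → ℝ) : ℝ :=
  Filter.limsup (bohlAvg D) bohlFilter

/-- Lower Bohl exponent of `D`. -/
noncomputable def bohlLower (D : ℝ → ℝ) : ℝ :=
  Filter.liminf (bohlAvg D) bohlFilter

/-!
Positivity of `p` and `p ≤ 1` follow from the variation-of-constants formula applied to the
linear equations satisfied by `p` and `1 - p`, with nonnegative forcing. Then `u = 1 / p` solves
the linear equation `u' = D u + c`, so `u t = Φ(t, 0) u 0 + ∫₀ᵗ Φ(t, s) c s ds`. A negative upper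
Bohl exponent gives `Φ(t, s) ≤ K e^{-α (t - s)}` for some `α > 0`, hence `u` is bounded and `p` is
bounded away from `0`.
-/

open Real MeasureTheory

theorem Phi_pos (D : ℝ → ℝ) (t s : ℝ) : 0 < Phi D t s := exp_pos _

theorem hasDerivWithinAt_integral_Ici {f : ℝ → ℝ} {a x : ℝ} (hf : ContinuousOn f (Ici a))
    (hx : a ≤ x) : HasDerivWithinAt (fun t => ∫ y in a..t, f y) (f x) (Ici a) x := by
  set g : ℝ → ℝ := fun y => f (max a y)
  have hg : Continuous g :=
    hf.comp_continuous (continuous_const.max continuous_id) fun y => le_max_left a y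
  have hfg : EqOn g f (Ici a) := fun y hy => by simp only [g, max_eq_right (mem_Ici.1 hy)]
  have hint : EqOn (fun t => ∫ y in a..t, g y) (fun t => ∫ y in a..t, f y) (Ici a) :=
    fun t ht => intervalIntegral.integral_congr fun y hy =>
      hfg (ordConnected_Ici.uIcc_subset self_mem_Ici ht hy)
  have hderiv := (intervalIntegral.integral_hasDerivAt_right (hg.intervalIntegrable a x)
    hg.aestronglyMeasurable.stronglyMeasurableAtFilter hg.continuousAt).hasDerivWithinAt
    (s := Ici a)
  rw [hfg hx] at hderiv
  exact hderiv.congr (fun t ht => (hint ht).symm) (hint hx).symm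

theorem continuousOn_Phi {a : ℝ → ℝ} {t₀ t : ℝ} (ha : IntervalIntegrable a volume t₀ t) :
    ContinuousOn (fun s => Phi a t s) (uIcc t₀ t) :=
  ((intervalIntegral.continuousOn_primitive_interval' ha right_mem_uIcc).neg.rexp).congr
    fun s _ => by rw [Phi, intervalIntegral.integral_symm]; rfl

theorem eq_Phi_mul_add_integral_Phi_mul {a g u : ℝ → ℝ} {t₀ t : ℝ}
    (ha : ContinuousOn a (Ici t₀)) (hg : ContinuousOn g (Ici t₀))
    (hu : ∀ s, t₀ ≤ s → HasDerivAt u (a s * u s + g s) s) (ht : t₀ ≤ t) :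
    u t = Phi a t t₀ * u t₀ + ∫ s in t₀..t, Phi a t s * g s := by
  set A : ℝ → ℝ := fun s => ∫ x in t₀..s, a x
  have hA : ∀ s, t₀ ≤ s → HasDerivWithinAt A (a s) (Ici t₀) s :=
    fun s hs => hasDerivWithinAt_integral_Ici ha hs
  have hAc : ContinuousOn A (Ici t₀) := fun s hs => (hA s hs).continuousWithinAt
  have hG : ContinuousOn (fun s => exp (-A s) * g s) (Ici t₀) := hAc.neg.rexp.mul hg
  set w : ℝ → ℝ := fun s => exp (-A s) * u s - ∫ x in t₀..s, exp (-A x) * g x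
  have hw : ∀ s, t₀ ≤ s → HasDerivWithinAt w 0 (Ici t₀) s := fun s hs =>
    (((hA s hs).neg.exp.mul (hu s hs).hasDerivWithinAt).sub
      (hasDerivWithinAt_integral_Ici hG hs)).congr_deriv (by simp only [Pi.neg_apply]; ring)
  have hwt : w t = u t₀ := by
    have := constant_of_has_deriv_right_zero
      (fun s hs => (hw s hs.1).continuousWithinAt.mono Icc_subset_Ici_self)
      (fun s hs => (hw s hs.1).mono (Ici_subset_Ici.2 hs.1)) t ⟨ht, le_rfl⟩
    simpa [w, A] using this
  have hint : ∀ r, t₀ ≤ r → IntervalIntegrable a volume t₀ r := fun r hr =>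
    (ha.mono (ordConnected_Ici.uIcc_subset self_mem_Ici hr)).intervalIntegrable
  have hPhi : ∀ s ∈ uIcc t₀ t, Phi a t s * g s = exp (A t) * (exp (-A s) * g s) := by
    intro s hs
    rw [uIcc_of_le ht] at hs
    rw [Phi, ← mul_assoc, ← exp_add, ← sub_eq_add_neg,
      intervalIntegral.integral_interval_sub_left (hint t ht) (hint s hs.1)]
  rw [intervalIntegral.integral_congr hPhi, intervalIntegral.integral_const_mul, ← hwt]
  simp only [w, Phi, A, mul_sub, ← mul_assoc, ← exp_add, add_neg_cancel, exp_zero, one_mul]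
  ring

theorem Phi_mul_le_of_hasDerivAt {a g u : ℝ → ℝ} {t₀ t : ℝ}
    (ha : ContinuousOn a (Ici t₀)) (hg : ContinuousOn g (Ici t₀)) (hg0 : ∀ s, t₀ ≤ s → 0 ≤ g s)
    (hu : ∀ s, t₀ ≤ s → HasDerivAt u (a s * u s + g s) s) (ht : t₀ ≤ t) :
    Phi a t t₀ * u t₀ ≤ u t := by
  rw [eq_Phi_mul_add_integral_Phi_mul ha hg hu ht, le_add_iff_nonneg_right]
  exact intervalIntegral.integral_nonneg ht fun s hs => mul_nonneg (Phi_pos _ _ _).le (hg0 s hs.1)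

theorem integral_exp_neg_mul_sub_le {α : ℝ} (hα : 0 < α) (t : ℝ) :
    ∫ s in (0 : ℝ)..t, exp (-(α * (t - s))) ≤ α⁻¹ := by
  have hrw : (fun s => exp (-(α * (t - s)))) = fun s => exp (α * s - α * t) := by
    ext s; ring_nf
  rw [hrw, intervalIntegral.integral_comp_mul_sub (fun x => exp x) hα.ne', integral_exp,
    smul_eq_mul, sub_self, exp_zero]
  exact mul_le_of_le_one_right (inv_pos.2 hα).le (by linarith [exp_pos (α * 0 - α * t)])

theorem le_of_hasDerivAt_of_Phi_le {a g u : ℝ → ℝ} {α K G : ℝ} (hα : 0 < α) (hG : 0 ≤ G)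
    (ha : ContinuousOn a (Ici 0)) (hg : ContinuousOn g (Ici 0)) (hgG : ∀ t, 0 ≤ t → g t ≤ G)
    (hPhi : ∀ s t, 0 ≤ s → s ≤ t → Phi a t s ≤ K * exp (-(α * (t - s))))
    (hu : ∀ t, 0 ≤ t → HasDerivAt u (a t * u t + g t) t) (hu0 : 0 ≤ u 0) {t : ℝ} (ht : 0 ≤ t) :
    u t ≤ K * u 0 + K * G * α⁻¹ := by
  have hK : 0 ≤ K := by simpa using ((Phi_pos a 0 0).trans_le (hPhi 0 0 le_rfl le_rfl)).le
  have hsub : uIcc 0 t ⊆ Ici 0 := ordConnected_Ici.uIcc_subset self_mem_Ici ht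
  have hPhi_int : IntervalIntegrable (fun s => Phi a t s * g s) volume 0 t :=
    ((continuousOn_Phi (ha.mono hsub).intervalIntegrable).mul (hg.mono hsub)).intervalIntegrable
  have hexp_int : IntervalIntegrable (fun s => K * G * exp (-(α * (t - s)))) volume 0 t := by
    apply Continuous.intervalIntegrable; fun_prop
  rw [eq_Phi_mul_add_integral_Phi_mul ha hg hu ht]
  gcongr ?_ + ?_
  · refine mul_le_mul_of_nonneg_right ((hPhi 0 t le_rfl ht).trans ?_) hu0
    exact mul_le_of_le_one_right hK (exp_le_one_iff.2 (by nlinarith))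
  calc ∫ s in (0 : ℝ)..t, Phi a t s * g s
      ≤ ∫ s in (0 : ℝ)..t, K * G * exp (-(α * (t - s))) :=
        intervalIntegral.integral_mono_on ht hPhi_int hexp_int fun s hs => by
          calc Phi a t s * g s ≤ Phi a t s * G :=
                mul_le_mul_of_nonneg_left (hgG s hs.1) (Phi_pos _ _ _).le
            _ ≤ K * exp (-(α * (t - s))) * G := mul_le_mul_of_nonneg_right (hPhi s t hs.1 hs.2) hG
            _ = K * G * exp (-(α * (t - s))) := by ring
    _ = K * G * ∫ s in (0 : ℝ)..t, exp (-(α * (t - s))) := intervalIntegral.integral_const_mul _ _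
    _ ≤ K * G * α⁻¹ := mul_le_mul_of_nonneg_left (integral_exp_neg_mul_sub_le hα t) (by positivity)

theorem isBoundedUnder_bohlAvg_of_bohlUpper_ne_zero {D : ℝ → ℝ} (hB : bohlUpper D ≠ 0) :
    IsBoundedUnder (· ≤ ·) bohlFilter (bohlAvg D) := by
  by_contra h
  exact hB (Real.limsup_of_not_isBoundedUnder h)

theorem exists_integral_le_of_bohlUpper_lt {D : ℝ → ℝ} {β : ℝ} (hB : bohlUpper D < β)
    (hβ : β ≤ 0) : ∃ T > 0, ∀ s t, 0 ≤ s → s + T ≤ t → ∫ τ in s..t, D τ ≤ β * (t - s) := by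
  have hev := eventually_lt_of_limsup_lt hB
    (isBoundedUnder_bohlAvg_of_bohlUpper_ne_zero (hB.trans_le hβ).ne)
  rw [bohlFilter, eventually_inf_principal, eventually_comap, eventually_atTop] at hev
  obtain ⟨T, hT⟩ := hev
  refine ⟨max T 1, by positivity, fun s t hs hst => ?_⟩
  have hlen : 0 < t - s := by linarith [le_max_right T 1]
  have h := hT (t - s) (by linarith [le_max_left T 1]) (s, t) rfl ⟨hs, by linarith⟩
  rw [bohlAvg, inv_mul_lt_iff₀ hlen] at h
  linarith

theorem exists_Phi_le_of_bohlUpper_neg {D : ℝ → ℝ} {m : ℝ} (hD : LocallyIntegrableOn D (Ici 0))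
    (hm : ∀ t, 0 ≤ t → -m ≤ D t) (hB : bohlUpper D < 0) :
    ∃ α > 0, ∃ K, ∀ s t, 0 ≤ s → s ≤ t → Phi D t s ≤ K * exp (-(α * (t - s))) := by
  obtain ⟨T, hT, hTint⟩ := exists_integral_le_of_bohlUpper_lt (D := D) (β := bohlUpper D / 2)
    (by linarith) (by linarith)
  refine ⟨-(bohlUpper D / 2), by linarith, exp (m * T), fun s t hs hst => ?_⟩
  have hint : ∀ a b, 0 ≤ a → 0 ≤ b → IntervalIntegrable D volume a b := fun a b ha hb =>
    (hD.integrableOn_compact_subset (ordConnected_Ici.uIcc_subset ha hb) isCompact_uIcc)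
      |>.intervalIntegrable
  have ht : 0 ≤ t := hs.trans hst
  -- `[s, t]` may be too short for the Bohl estimate; `[s, t + T]` is not, and the added window
  -- `[t, t + T]` is controlled by the lower bound on `D`.
  have hlong := hTint s (t + T) hs (by linarith)
  have hwindow : -m * T ≤ ∫ τ in t..t + T, D τ := by
    have := intervalIntegral.integral_mono_on (by linarith) intervalIntegrable_const
      (hint t (t + T) ht (by linarith)) fun τ hτ => hm τ (ht.trans hτ.1)
    simpa [mul_comm] using this
  have hsplit := intervalIntegral.integral_add_adjacent_intervals
    (hint s t hs ht) (hint t (t + T) ht (by linarith))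
  have hdecay : bohlUpper D / 2 * T ≤ 0 := mul_nonpos_of_nonpos_of_nonneg (by linarith) hT.le
  rw [Phi, ← exp_add]
  gcongr
  linarith

section Levins

variable {c e p : ℝ → ℝ} (hc : ContinuousOn c (Ici 0)) (he : ContinuousOn e (Ici 0))
  (hp : ∀ t, 0 ≤ t → HasDerivAt p (c t * p t * (1 - p t) - e t * p t) t)
include hp

theorem levins_continuousOn : ContinuousOn p (Ici 0) :=
  fun t ht => (hp t ht).continuousAt.continuousWithinAt

include hc he in
theorem levins_pos (hp0 : 0 < p 0) {t : ℝ} (ht : 0 ≤ t) : 0 < p t :=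
  (mul_pos (Phi_pos _ _ _) hp0).trans_le <| Phi_mul_le_of_hasDerivAt (g := 0)
    (a := fun s => c s * (1 - p s) - e s)
    ((hc.mul (continuousOn_const.sub (levins_continuousOn hp))).sub he) continuousOn_const
    (fun _ _ => le_rfl)
    (fun s hs => (hp s hs).congr_deriv (by simp only [Pi.zero_apply]; ring)) ht

include hc he in
theorem levins_le_one (he0 : ∀ t, 0 ≤ t → 0 ≤ e t) (hp0 : p 0 ∈ Ioc 0 1) {t : ℝ} (ht : 0 ≤ t) :
    p t ≤ 1 := by
  have hpc := levins_continuousOn hp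
  have h := Phi_mul_le_of_hasDerivAt (u := fun t => 1 - p t) (a := fun t => -(c t * p t))
    (g := fun t => e t * p t) (hc.mul hpc).neg (he.mul hpc)
    (fun s hs => mul_nonneg (he0 s hs) (levins_pos hc he hp hp0.1 hs).le)
    (fun s hs => ((hp s hs).const_sub 1).congr_deriv (by ring)) ht
  have := mul_nonneg (Phi_pos (fun t => -(c t * p t)) t 0).le (sub_nonneg.2 hp0.2)
  linarith

theorem levins_inv_hasDerivAt {t : ℝ} (ht : 0 ≤ t) (hpt : p t ≠ 0) :
    HasDerivAt (fun s => (p s)⁻¹) ((e t - c t) * (p t)⁻¹ + c t) t :=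
  ((hp t ht).inv hpt).congr_deriv (by field_simp; ring)

end Levins

theorem levins_persistence_general (c e : ℝ → ℝ)
    (hc_cont : ContinuousOn c (Set.Ici 0)) (he_cont : ContinuousOn e (Set.Ici 0))
    (hc_bdd : ∃ M, ∀ t, 0 ≤ t → |c t| ≤ M)
    (he_nonneg : ∀ t, 0 ≤ t → 0 ≤ e t)
    (D : ℝ → ℝ) (hD : ∀ t, D t = e t - c t)
    (p : ℝ → ℝ)
    (hp : ∀ t, 0 ≤ t → HasDerivAt p (c t * p t * (1 - p t) - e t * p t) t)
    (hp0 : p 0 ∈ Set.Ioc (0 : ℝ) 1)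
    (hB : bohlUpper D < 0) :
    0 < Filter.liminf p Filter.atTop := by
  obtain ⟨M, hM⟩ := hc_bdd
  have hc_le : ∀ t, 0 ≤ t → c t ≤ M := fun t ht => (abs_le.1 (hM t ht)).2
  have hD_cont : ContinuousOn D (Ici 0) := (he_cont.sub hc_cont).congr fun t _ => hD t
  obtain ⟨α, hα, K, hPhi⟩ := exists_Phi_le_of_bohlUpper_neg (m := M)
    (hD_cont.locallyIntegrableOn measurableSet_Ici)
    (fun t ht => by linarith [hD t, hc_le t ht, he_nonneg t ht]) hB
  have hpos : ∀ t, 0 ≤ t → 0 < p t := fun t ht => levins_pos hc_cont he_cont hp hp0.1 ht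
  set U := K * (p 0)⁻¹ + K * M * α⁻¹
  have hinv_le : ∀ t, 0 ≤ t → (p t)⁻¹ ≤ U := fun t ht =>
    le_of_hasDerivAt_of_Phi_le (u := fun s => (p s)⁻¹) hα ((abs_nonneg _).trans (hM 0 le_rfl))
      hD_cont hc_cont hc_le hPhi
      (fun s hs => by simpa only [hD] using levins_inv_hasDerivAt hp hs (hpos s hs).ne')
      (inv_nonneg.2 hp0.1.le) ht
  have hU : 0 < U := (inv_pos.2 hp0.1).trans_le (hinv_le 0 le_rfl)
  have hp_le : ∀ᶠ t in atTop, p t ≤ 1 :=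
    eventually_atTop.2 ⟨0, fun t ht => levins_le_one hc_cont he_cont hp he_nonneg hp0 ht⟩
  have hp_ge : ∀ᶠ t in atTop, U⁻¹ ≤ p t :=
    eventually_atTop.2 ⟨0, fun t ht => inv_le_of_inv_le₀ (hpos t ht) (hinv_le t ht)⟩
  exact (inv_pos.2 hU).trans_le
    (le_liminf_of_le (isBoundedUnder_of_eventually_le hp_le).isCoboundedUnder_ge hp_ge)

/-- Persistence: if the colonization rate is bounded below by `c⋆ > 0` and
`β⁺(e - c) < 0`, then the fraction of occupied patches satisfies
`liminf_{t→∞} p t > 0`. -/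
theorem levins_persistence (c e : ℝ → ℝ) (cstar : ℝ) (hcstar : 0 < cstar)
    (hc_cont : ContinuousOn c (Set.Ici 0)) (he_cont : ContinuousOn e (Set.Ici 0))
    (hc_bdd : ∃ M, ∀ t, 0 ≤ t → |c t| ≤ M) (he_bdd : ∃ M, ∀ t, 0 ≤ t → |e t| ≤ M)
    (hc_lb : ∀ t, 0 ≤ t → cstar ≤ c t) (he_nonneg : ∀ t, 0 ≤ t → 0 ≤ e t)
    (D : ℝ → ℝ) (hD : ∀ t, D t = e t - c t)
    (p : ℝ → ℝ)
    (hp : ∀ t, 0 ≤ t → HasDerivAt p (c t * p t * (1 - p t) - e t * p t) t)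
    (hp0 : p 0 ∈ Set.Ioc (0 : ℝ) 1)
    (hB : bohlUpper D < 0) :
    0 < Filter.liminf p Filter.atTop :=
  levins_persistence_general c e hc_cont he_cont hc_bdd he_nonneg D hD p hp hp0 hB
end

section
/- Let D : [0,∞) → ℝ be a bounded continuous function. For a real number λ, the following are equivalent: (i) λ < β⁻(D), where β⁻(D) is the lower Bohl exponent of D; (ii) the shifted equation x' = (D(t) − λ)·x admits an exponential dichotomy of unstable type on [0,∞), i.e., there exist constants L ≥ 1 and η > 0 such that exp(∫_s^t (D(τ) − λ) dτ) ≥ L⁻¹·exp(η·(t − s)) for all t ≥ s ≥ 0. -/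
open Filter Set

/-!
Writing `I(s, t) = ∫ₛᵗ D`, the condition `λ < β⁻(D)` says that for some `η > 0` the bound
`I(s, t) ≥ (λ + η)(t - s)` holds once `t - s` is large. Since `|I(s, t)| ≤ M (t - s)`, the
short intervals only cost a constant, so this is equivalent to an affine lower bound
`I(s, t) - λ (t - s) ≥ η (t - s) - C` on all intervals; conversely such a bound gives
`I(s, t) ≥ (λ + η / 2)(t - s)` as soon as `η (t - s) ≥ 2 C`. Taking logarithms, `L = exp C`
turns the affine bound into the exponential dichotomy.
-/

open Real

theorem eventually_bohlFilter_iff {P : ℝ × ℝ → Prop} :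
    (∀ᶠ q in bohlFilter, P q) ↔ ∃ T : ℝ, ∀ s t : ℝ, 0 ≤ s → s < t → T ≤ t - s → P (s, t) := by
  rw [bohlFilter, eventually_inf_principal, eventually_comap, eventually_atTop]
  constructor
  · rintro ⟨T, hT⟩
    exact ⟨T, fun s t hs hst hTst => hT (t - s) hTst (s, t) rfl ⟨hs, hst⟩⟩
  · rintro ⟨T, hT⟩
    exact ⟨T, fun y hy q hq hqS => hT q.1 q.2 hqS.1 hqS.2 (hq ▸ hy)⟩

instance bohlFilter_neBot : bohlFilter.NeBot := by
  rw [← frequently_true_iff_neBot, Filter.Frequently, eventually_bohlFilter_iff]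
  rintro ⟨T, hT⟩
  exact hT 0 (max T 1) le_rfl (by positivity) (by simp) trivial

theorem eventually_le_bohlAvg_iff {D : ℝ → ℝ} {μ : ℝ} :
    (∀ᶠ q in bohlFilter, μ ≤ bohlAvg D q) ↔
      ∃ T, ∀ s t, 0 ≤ s → s < t → T ≤ t - s → μ * (t - s) ≤ ∫ τ in s..t, D τ := by
  rw [eventually_bohlFilter_iff]
  exact exists_congr fun T => forall₄_congr fun s t _ hst => imp_congr_right fun _ =>
    le_inv_mul_iff₀' (sub_pos.2 hst)

section Bounded

variable {D : ℝ → ℝ} {M : ℝ}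

theorem abs_integral_le_mul_sub (hM : ∀ t, 0 ≤ t → |D t| ≤ M) {s t : ℝ} (hs : 0 ≤ s)
    (hst : s ≤ t) : |∫ τ in s..t, D τ| ≤ M * (t - s) := by
  have h := intervalIntegral.norm_integral_le_of_norm_le_const (C := M) (f := D) (a := s)
    (b := t) fun x hx => hM x (hs.trans (uIoc_of_le hst ▸ hx).1.le)
  rwa [Real.norm_eq_abs, abs_of_nonneg (sub_nonneg.2 hst)] at h

theorem isBoundedUnder_abs_bohlAvg (hM : ∀ t, 0 ≤ t → |D t| ≤ M) :
    IsBoundedUnder (· ≤ ·) bohlFilter fun q => |bohlAvg D q| := by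
  refine ⟨M, eventually_map.2 (eventually_bohlFilter_iff.2 ⟨0, fun s t hs hst _ => ?_⟩)⟩
  have hts : 0 < t - s := sub_pos.2 hst
  change |bohlAvg D (s, t)| ≤ M
  rw [bohlAvg, abs_mul, abs_inv, abs_of_pos hts, inv_mul_le_iff₀ hts, mul_comm]
  exact abs_integral_le_mul_sub hM hs hst.le

theorem lt_bohlLower_iff (hM : ∀ t, 0 ≤ t → |D t| ≤ M) (lam : ℝ) :
    lam < bohlLower D ↔
      ∃ η > 0, ∃ T, ∀ s t, 0 ≤ s → s < t → T ≤ t - s →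
        (lam + η) * (t - s) ≤ ∫ τ in s..t, D τ := by
  obtain ⟨hle, hge⟩ := isBoundedUnder_le_abs.1 (isBoundedUnder_abs_bohlAvg hM)
  simp_rw [← eventually_le_bohlAvg_iff]
  constructor
  · intro hlam
    refine ⟨(bohlLower D - lam) / 2, by linarith, ?_⟩
    have hmid : lam + (bohlLower D - lam) / 2 < bohlLower D := by linarith
    exact (eventually_lt_of_lt_liminf hmid hge).mono fun _ h => h.le
  · rintro ⟨η, hη, hev⟩
    have hlow : lam + η ≤ bohlLower D := le_liminf_of_le hle.isCoboundedUnder_ge hev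
    linarith

theorem exists_affine_lower_bound_of_le_integral (hM : ∀ t, 0 ≤ t → |D t| ≤ M) {lam η T : ℝ}
    (hT : ∀ s t, 0 ≤ s → s < t → T ≤ t - s → (lam + η) * (t - s) ≤ ∫ τ in s..t, D τ) :
    ∃ C, 0 ≤ C ∧ ∀ s t, 0 ≤ s → s ≤ t →
      η * (t - s) - C ≤ (∫ τ in s..t, D τ) - lam * (t - s) := by
  have hM0 : 0 ≤ M := (abs_nonneg _).trans (hM 0 le_rfl)
  have hK : 0 ≤ M + |lam| + |η| := by positivity
  refine ⟨(M + |lam| + |η|) * max T 0, by positivity, fun s t hs hst => ?_⟩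
  by_cases hlong : s < t ∧ T ≤ t - s
  · nlinarith [hT s t hs hlong.1 hlong.2, mul_nonneg hK (le_max_right T 0)]
  · have hshort : t - s ≤ max T 0 := by
      rcases hst.eq_or_lt with rfl | hlt
      · simp
      · exact (lt_of_not_ge fun h => hlong ⟨hlt, h⟩).le.trans (le_max_left _ _)
    have hI := (abs_le.1 (abs_integral_le_mul_sub hM hs hst)).1
    have hts : 0 ≤ t - s := sub_nonneg.2 hst
    nlinarith [mul_le_mul_of_nonneg_right (le_abs_self lam) hts,
      mul_le_mul_of_nonneg_right (le_abs_self η) hts, mul_le_mul_of_nonneg_left hshort hK]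

end Bounded

theorem exists_le_integral_of_affine_lower_bound {D : ℝ → ℝ} {lam η C : ℝ} (hη : 0 < η)
    (h : ∀ s t, 0 ≤ s → s ≤ t → η * (t - s) - C ≤ (∫ τ in s..t, D τ) - lam * (t - s)) :
    ∃ T, ∀ s t, 0 ≤ s → s < t → T ≤ t - s → (lam + η / 2) * (t - s) ≤ ∫ τ in s..t, D τ := by
  refine ⟨2 * C / η, fun s t hs hst hT => ?_⟩
  have hlarge : 2 * C ≤ η * (t - s) := by rw [div_le_iff₀ hη] at hT; linarith
  linarith [h s t hs hst.le]

theorem lt_bohlLower_iff_affine_lower_bound {D : ℝ → ℝ} {M : ℝ}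
    (hM : ∀ t, 0 ≤ t → |D t| ≤ M) (lam : ℝ) :
    lam < bohlLower D ↔ ∃ C η, 0 ≤ C ∧ 0 < η ∧ ∀ s t, 0 ≤ s → s ≤ t →
      η * (t - s) - C ≤ (∫ τ in s..t, D τ) - lam * (t - s) := by
  rw [lt_bohlLower_iff hM]
  constructor
  · rintro ⟨η, hη, T, hT⟩
    obtain ⟨C, hC, h⟩ := exists_affine_lower_bound_of_le_integral hM hT
    exact ⟨C, η, hC, hη, h⟩
  · rintro ⟨C, η, -, hη, h⟩
    exact ⟨η / 2, half_pos hη, exists_le_integral_of_affine_lower_bound hη h⟩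

theorem inv_mul_exp_le_exp_iff {L : ℝ} (hL : 0 < L) (a b : ℝ) :
    L⁻¹ * exp a ≤ exp b ↔ a - log L ≤ b := by
  rw [← exp_le_exp (x := a - log L), exp_sub, exp_log hL, div_eq_inv_mul]

/-- Characterization of the spectral gap `(-∞, β⁻(D))`: `λ < β⁻(D)` iff the shifted
equation `x' = (D t - λ) x` admits an exponential dichotomy of unstable type on `[0,∞)`. -/
theorem spectral_gap_unstable_characterization (D : ℝ → ℝ)
    (hD_cont : ContinuousOn D (Set.Ici 0)) (hD_bdd : ∃ M, ∀ t, 0 ≤ t → |D t| ≤ M)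
    (lam : ℝ) :
    lam < bohlLower D ↔
      ∃ L η : ℝ, 1 ≤ L ∧ 0 < η ∧ ∀ s t, 0 ≤ s → s ≤ t →
        L⁻¹ * Real.exp (η * (t - s)) ≤ Real.exp (∫ τ in s..t, (D τ - lam)) := by
  obtain ⟨M, hM⟩ := hD_bdd
  have hshift : ∀ s t, 0 ≤ s → s ≤ t →
      ∫ τ in s..t, (D τ - lam) = (∫ τ in s..t, D τ) - lam * (t - s) := fun s t hs hst => by
    have hD : IntervalIntegrable D MeasureTheory.volume s t :=
      (hD_cont.mono fun x hx => hs.trans (uIcc_of_le hst ▸ hx).1).intervalIntegrable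
    rw [intervalIntegral.integral_sub hD intervalIntegrable_const,
      intervalIntegral.integral_const, smul_eq_mul, mul_comm]
  rw [lt_bohlLower_iff_affine_lower_bound hM]
  constructor
  · rintro ⟨C, η, hC, hη, h⟩
    refine ⟨exp C, η, one_le_exp_iff.2 hC, hη, fun s t hs hst => ?_⟩
    rw [inv_mul_exp_le_exp_iff (exp_pos C), log_exp, hshift s t hs hst]
    exact h s t hs hst
  · rintro ⟨L, η, hL, hη, h⟩
    refine ⟨log L, η, log_nonneg hL, hη, fun s t hs hst => ?_⟩
    rw [← hshift s t hs hst, ← inv_mul_exp_le_exp_iff (by linarith)]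
    exact h s t hs hst
end
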